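/- Let H and K be finite connected graphs whose vertex sets intersect in exactly one vertex k and whose edge sets are disjoint, and let G = H ∪ K be their union. Let f : ℝ → ℝ be an odd function. Then a point x ∈ ℝ^{V(G)} is an equilibrium of the system on G if and only if the restriction x|_{V(H)} is an equilibrium of the system on H and the restriction x|_{V(K)} is an equilibrium of the system on K. Consequently, if G is a connected graph with block decomposition G = G₁ ∪ ⋯ ∪ G_p, then x ∈ ℝ^{V(G)} is an equilibrium of G if and only if x|_{V(G_j)} is an equilibrium of G_j for every j. -/

import Mathlib

open scoped Classical

/-- A vertex `v` of a subgraph `B` is not a cut vertex: removing it leaves `B`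
either empty or connected. -/
def NoCutVertex {V : Type} {G : SimpleGraph V} (B : G.Subgraph) : Prop :=
  ∀ v ∈ B.verts, (B.deleteVerts {v}).verts = ∅ ∨ (B.deleteVerts {v}).coe.Connected

/-- A block of `G`: a maximal connected subgraph without cut vertices. -/
def IsBlock {V : Type} (G : SimpleGraph V) (B : G.Subgraph) : Prop :=
  B.coe.Connected ∧ NoCutVertex B ∧
    ∀ B' : G.Subgraph, B ≤ B' → B'.coe.Connected → NoCutVertex B' → B' = B

/-!
For odd `f` the edge flux `f (x j - x i)` is antisymmetric in `i, j`, so the total flux of a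
graph over all of its vertices vanishes, and the sum of the field over a vertex set `S` is the
flux leaving `S`.

When `H` and `K` share only the vertex `k`, the field of `G` at any other vertex is the field of
`H` or that of `K`, and at `k` the field of `H` vanishes because its total flux does.

For a block `B` and `i ∈ B`, let `S` be the set of vertices reachable from `i` by a walk meeting
`B` only at `i`. Every edge leaving `S` is an edge of `B` at `i`, since a path through `S` from
`i` back to `B` could be added to `B` without creating a cut vertex. Hence the field of `B` at `i`
is the flux leaving `S`, which is zero at an equilibrium of `G`. Conversely every edge lies in
exactly one block, so the field of `G` is the sum of the fields of its blocks.
-/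

section AntisymmetricSums

variable {ι M : Type*} [AddCommGroup M] [IsAddTorsionFree M] {g : ι → ι → M}

lemma Finset.sum_sum_eq_zero_of_antisymm (hg : ∀ a b, g a b = -g b a) (s : Finset ι) :
    ∑ a ∈ s, ∑ b ∈ s, g a b = 0 := by
  have h : ∑ a ∈ s, ∑ b ∈ s, g a b = -∑ a ∈ s, ∑ b ∈ s, g a b := by
    conv_lhs => rw [Finset.sum_comm]
    rw [← Finset.sum_neg_distrib]
    exact Finset.sum_congr rfl fun a _ => by
      rw [← Finset.sum_neg_distrib]; exact Finset.sum_congr rfl fun b _ => hg b a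
  rwa [eq_neg_iff_add_eq_zero, ← two_nsmul, smul_eq_zero_iff_right two_ne_zero] at h

lemma Finset.sum_sum_compl_eq_zero_of_antisymm [Fintype ι] [DecidableEq ι]
    (hg : ∀ a b, g a b = -g b a) {s : Finset ι} (hrow : ∀ a ∈ s, ∑ b, g a b = 0) :
    ∑ a ∈ s, ∑ b ∈ sᶜ, g a b = 0 := by
  have : ∑ a ∈ s, (∑ b ∈ s, g a b + ∑ b ∈ sᶜ, g a b) = 0 :=
    Finset.sum_eq_zero fun a ha => (Finset.sum_add_sum_compl s (g a)).trans (hrow a ha)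
  rwa [Finset.sum_add_distrib, Finset.sum_sum_eq_zero_of_antisymm hg, zero_add] at this

lemma Fintype.sum_eq_zero_of_antisymm_of_forall_ne [Fintype ι] (hg : ∀ a b, g a b = -g b a)
    (k : ι) (hrow : ∀ a ≠ k, ∑ b, g a b = 0) : ∑ b, g k b = 0 := by
  rw [← Finset.sum_sum_eq_zero_of_antisymm hg Finset.univ,
    Finset.sum_eq_single k (fun a _ ha => hrow a ha) (by simp)]

end AntisymmetricSums

namespace SimpleGraph

section Flux

variable {V W W₁ W₂ : Type*} (G : SimpleGraph V) (f : ℝ → ℝ) (x : V → ℝ)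

noncomputable def edgeFlux (i j : V) : ℝ :=
  if G.Adj i j then f (x j - x i) else 0

def IsEquilibrium [Fintype V] : Prop :=
  ∀ i, ∑ j, G.edgeFlux f x i j = 0

variable {G f x}

lemma edgeFlux_congr {G₁ G₂ : SimpleGraph V} {i j : V} (h : G₁.Adj i j ↔ G₂.Adj i j) :
    G₁.edgeFlux f x i j = G₂.edgeFlux f x i j := by
  simp only [edgeFlux, h]

lemma edgeFlux_of_not_adj {i j : V} (h : ¬G.Adj i j) : G.edgeFlux f x i j = 0 :=
  if_neg h

lemma edgeFlux_antisymm (hodd : ∀ t, f (-t) = -f t) (i j : V) :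
    G.edgeFlux f x i j = -G.edgeFlux f x j i := by
  by_cases h : G.Adj i j
  · rw [edgeFlux, edgeFlux, if_pos h, if_pos h.symm, ← hodd, neg_sub]
  · rw [edgeFlux, edgeFlux, if_neg h, if_neg (mt Adj.symm h), neg_zero]

lemma sum_edgeFlux_eq_zero_of_notMem_support [Fintype V] {i : V} (hi : i ∉ G.support) :
    ∑ j, G.edgeFlux f x i j = 0 :=
  Finset.sum_eq_zero fun j _ => edgeFlux_of_not_adj fun h => hi ⟨j, h⟩

lemma edgeFlux_sup {G₁ G₂ : SimpleGraph V} (h : Disjoint G₁ G₂) (i j : V) :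
    (G₁ ⊔ G₂).edgeFlux f x i j = G₁.edgeFlux f x i j + G₂.edgeFlux f x i j := by
  by_cases h₁ : G₁.Adj i j
  · have h₂ : ¬G₂.Adj i j := disjoint_left.mp h i j h₁
    simp [edgeFlux, h₁, h₂]
  · by_cases h₂ : G₂.Adj i j <;> simp [edgeFlux, h₁, h₂]

lemma IsEquilibrium.left_of_sup [Fintype V] (hodd : ∀ t, f (-t) = -f t)
    {G₁ G₂ : SimpleGraph V} (hdisj : Disjoint G₁ G₂) {k : V}
    (hk : ∀ v ∈ G₁.support, v ∈ G₂.support → v = k)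
    (h : (G₁ ⊔ G₂).IsEquilibrium f x) : G₁.IsEquilibrium f x := by
  have hrow : ∀ i ≠ k, ∑ j, G₁.edgeFlux f x i j = 0 := by
    intro i hik
    by_cases hi₁ : i ∈ G₁.support
    · have hi₂ : i ∉ G₂.support := fun hi₂ => hik (hk i hi₁ hi₂)
      simpa only [edgeFlux_sup hdisj, Finset.sum_add_distrib,
        sum_edgeFlux_eq_zero_of_notMem_support hi₂, add_zero] using h i
    · exact sum_edgeFlux_eq_zero_of_notMem_support hi₁
  intro i
  by_cases hik : i = k
  · exact hik ▸ Fintype.sum_eq_zero_of_antisymm_of_forall_ne (edgeFlux_antisymm hodd) k hrow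
  · exact hrow i hik

lemma isEquilibrium_sup_iff [Fintype V] (hodd : ∀ t, f (-t) = -f t)
    {G₁ G₂ : SimpleGraph V} (hdisj : Disjoint G₁ G₂) {k : V}
    (hk : ∀ v ∈ G₁.support, v ∈ G₂.support → v = k) :
    (G₁ ⊔ G₂).IsEquilibrium f x ↔ G₁.IsEquilibrium f x ∧ G₂.IsEquilibrium f x := by
  refine ⟨fun h => ⟨h.left_of_sup hodd hdisj hk, ?_⟩, fun ⟨h₁, h₂⟩ i => ?_⟩
  · rw [sup_comm] at h
    exact h.left_of_sup hodd hdisj.symm fun v h₂ h₁ => hk v h₁ h₂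
  · simp only [edgeFlux_sup hdisj, Finset.sum_add_distrib, h₁ i, h₂ i, add_zero]

lemma sum_edgeFlux_map [Fintype V] [Fintype W] (e : W ↪ V) (H : SimpleGraph W) (i : W) :
    ∑ j, (H.map e).edgeFlux f x (e i) j = ∑ j, H.edgeFlux f (x ∘ e) i j := by
  refine (Fintype.sum_of_injective e e.injective _ _ ?_ fun j => ?_).symm
  · intro j hj
    refine edgeFlux_of_not_adj ?_
    rintro ⟨-, -, j', -, -, rfl⟩
    exact hj ⟨j', rfl⟩
  · simp only [edgeFlux, map_adj_apply, Function.comp_apply]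

lemma support_map_subset (e : W ↪ V) (H : SimpleGraph W) : (H.map e).support ⊆ Set.range e := by
  rintro _ ⟨_, -, i, -, -, rfl, -⟩
  exact ⟨i, rfl⟩

lemma isEquilibrium_map_iff [Fintype V] [Fintype W] (e : W ↪ V) (H : SimpleGraph W) :
    (H.map e).IsEquilibrium f x ↔ H.IsEquilibrium f (x ∘ e) := by
  refine ⟨fun h i => sum_edgeFlux_map e H i ▸ h (e i), fun h v => ?_⟩
  by_cases hv : v ∈ Set.range e
  · obtain ⟨i, rfl⟩ := hv
    rw [sum_edgeFlux_map, h i]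
  · exact sum_edgeFlux_eq_zero_of_notMem_support fun hs => hv (support_map_subset e H hs)

lemma isEquilibrium_map_sup_map_iff [Fintype V] [Fintype W₁] [Fintype W₂]
    (hodd : ∀ t, f (-t) = -f t) {e₁ : W₁ ↪ V} {e₂ : W₂ ↪ V} {H₁ : SimpleGraph W₁}
    {H₂ : SimpleGraph W₂} (hdisj : Disjoint (H₁.map e₁) (H₂.map e₂)) {k : V}
    (hk : ∀ a b, e₁ a = e₂ b → e₁ a = k) :
    (H₁.map e₁ ⊔ H₂.map e₂).IsEquilibrium f x ↔
      H₁.IsEquilibrium f (x ∘ e₁) ∧ H₂.IsEquilibrium f (x ∘ e₂) := by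
  rw [isEquilibrium_sup_iff hodd hdisj, isEquilibrium_map_iff, isEquilibrium_map_iff]
  intro v hv₁ hv₂
  obtain ⟨a, rfl⟩ := support_map_subset e₁ H₁ hv₁
  obtain ⟨b, hb⟩ := support_map_subset e₂ H₂ hv₂
  exact hk a b hb.symm

lemma map_subtype_adj {p : V → Prop} (H : SimpleGraph (Subtype p)) {i j : V} :
    (H.map (Function.Embedding.subtype p)).Adj i j ↔
      ∃ (hi : p i) (hj : p j), H.Adj ⟨i, hi⟩ ⟨j, hj⟩ := by
  simp only [map_adj, Function.Embedding.subtype_apply, Subtype.exists]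
  constructor
  · rintro ⟨i, hi, j, hj, h, rfl, rfl⟩
    exact ⟨hi, hj, h⟩
  · rintro ⟨hi, hj, h⟩
    exact ⟨i, hi, j, hj, h, rfl, rfl⟩

theorem isEquilibrium_iff_of_glue [Fintype V] [DecidableEq V] (hodd : ∀ t, f (-t) = -f t)
    {VH VK : Finset V} {k : V} (hcap : VH ∩ VK = {k})
    {H : SimpleGraph {v // v ∈ VH}} {K : SimpleGraph {v // v ∈ VK}} {G : SimpleGraph V}
    (hG : ∀ i j : V, G.Adj i j ↔
      ((∃ (hi : i ∈ VH) (hj : j ∈ VH), H.Adj ⟨i, hi⟩ ⟨j, hj⟩) ∨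
       (∃ (hi : i ∈ VK) (hj : j ∈ VK), K.Adj ⟨i, hi⟩ ⟨j, hj⟩)))
    (hdisj : ∀ (i j : V) (hiH : i ∈ VH) (hjH : j ∈ VH) (hiK : i ∈ VK) (hjK : j ∈ VK),
      ¬(H.Adj ⟨i, hiH⟩ ⟨j, hjH⟩ ∧ K.Adj ⟨i, hiK⟩ ⟨j, hjK⟩)) :
    G.IsEquilibrium f x ↔
      H.IsEquilibrium f (x ∘ (↑)) ∧ K.IsEquilibrium f (x ∘ (↑)) := by
  have hGsup :
      G = H.map (Function.Embedding.subtype _) ⊔ K.map (Function.Embedding.subtype _) := by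
    ext i j
    rw [hG, sup_adj, map_subtype_adj, map_subtype_adj]
  subst hGsup
  refine isEquilibrium_map_sup_map_iff hodd (k := k) ?_ fun a b hab => ?_
  · rw [disjoint_left]
    rintro i j hH hK
    obtain ⟨hiH, hjH, hH⟩ := (map_subtype_adj H).mp hH
    obtain ⟨hiK, hjK, hK⟩ := (map_subtype_adj K).mp hK
    exact hdisj i j hiH hjH hiK hjK ⟨hH, hK⟩
  · have hab : (a : V) = b := hab
    have : (a : V) ∈ VH ∩ VK := Finset.mem_inter.mpr ⟨a.2, hab ▸ b.2⟩
    rwa [hcap, Finset.mem_singleton] at this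

end Flux

section Subgraphs

variable {V : Type*} {G : SimpleGraph V} {B : G.Subgraph}

lemma Subgraph.deleteVerts_sup (A C : G.Subgraph) (s : Set V) :
    (A ⊔ C).deleteVerts s = A.deleteVerts s ⊔ C.deleteVerts s := by
  ext <;> simp only [deleteVerts_verts, verts_sup, deleteVerts_adj, sup_adj] <;>
    aesop (add safe forward [Adj.fst_mem, Adj.snd_mem])

lemma Subgraph.deleteVerts_singleton_of_notMem {A : G.Subgraph} {v : V} (h : v ∉ A.verts) :
    A.deleteVerts {v} = A := by
  rw [← deleteVerts_inter_verts_left_eq, Set.inter_singleton_eq_empty.mpr h, deleteVerts_empty]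

lemma Walk.IsPath.connected_deleteVerts_start {u v : V} {p : G.Walk u v} (hp : p.IsPath)
    (huv : u ≠ v) :
    (p.toSubgraph.deleteVerts {u}).Connected := by
  cases p with
  | nil => exact absurd rfl huv
  | cons h q =>
    have hu : u ∉ q.support := ((cons_isPath_iff h q).mp hp).2
    have hverts : q.toSubgraph.verts = ((cons h q).toSubgraph.deleteVerts {u}).verts := by
      ext w
      simp only [Subgraph.deleteVerts_verts, Set.mem_sdiff, Set.mem_singleton_iff,
        mem_verts_toSubgraph, support_cons, List.mem_cons]
      constructor
      · exact fun hw => ⟨Or.inr hw, fun hwu => hu (hwu ▸ hw)⟩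
      · rintro ⟨rfl | hw, hwu⟩
        · exact absurd rfl hwu
        · exact hw
    refine q.toSubgraph_connected.mono ⟨hverts.le, fun a b hab => ?_⟩ hverts
    have ha := hverts ▸ hab.fst_mem
    have hb := hverts ▸ hab.snd_mem
    exact Subgraph.deleteVerts_adj.mpr ⟨ha.1, ha.2, hb.1, hb.2, Or.inr hab⟩

lemma Walk.IsPath.connected_deleteVerts_end {u v : V} {p : G.Walk u v} (hp : p.IsPath)
    (huv : u ≠ v) :
    (p.toSubgraph.deleteVerts {v}).Connected := by
  simpa only [toSubgraph_reverse] using hp.reverse.connected_deleteVerts_start huv.symm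

lemma Subgraph.connected_deleteVerts_sup {A C : G.Subgraph} {v w : V}
    (hA : (A.deleteVerts {v}).Connected) (hC : (C.deleteVerts {v}).Connected)
    (hwA : w ∈ A.verts) (hwC : w ∈ C.verts) (hwv : w ≠ v) :
    ((A ⊔ C).deleteVerts {v}).Connected := by
  rw [Subgraph.deleteVerts_sup]
  exact Subgraph.connected_sup hA.preconnected hC.preconnected ⟨w, ⟨hwA, hwv⟩, hwC, hwv⟩

def Subgraph.reachOutside (B : G.Subgraph) (i : V) : Set V :=
  {w | ∃ q : G.Walk i w, ∀ z ∈ q.support, z = i ∨ z ∉ B.verts}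

lemma Subgraph.start_mem_reachOutside (B : G.Subgraph) (i : V) : i ∈ B.reachOutside i :=
  ⟨.nil, by simp⟩

lemma Subgraph.mem_reachOutside_of_adj {i w u : V} (hw : w ∈ B.reachOutside i) (h : G.Adj w u)
    (hu : u ∉ B.verts) : u ∈ B.reachOutside i := by
  obtain ⟨q, hq⟩ := hw
  refine ⟨q.concat h, fun z hz => ?_⟩
  rw [Walk.support_concat, List.mem_append, List.mem_singleton] at hz
  rcases hz with hz | rfl
  · exact hq z hz
  · exact Or.inr hu

lemma Subgraph.notMem_reachOutside {i u : V} (hu : u ∈ B.verts) (hui : u ≠ i) :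
    u ∉ B.reachOutside i := fun ⟨q, hq⟩ =>
  (hq u q.end_mem_support).elim hui (· hu)

end Subgraphs

end SimpleGraph

open SimpleGraph

section Blocks

variable {V : Type} {G : SimpleGraph V} {B : G.Subgraph}

lemma noCutVertex_of_forall_connected (h : ∀ v, (B.deleteVerts {v}).Connected) :
    NoCutVertex B :=
  fun v _ => Or.inr (h v).coe

namespace IsBlock

lemma connected (hB : IsBlock G B) : B.Connected := ⟨hB.1⟩

lemma connected_deleteVerts (hB : IsBlock G B) {a b : V} (ha : a ∈ B.verts) (hb : b ∈ B.verts)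
    (hab : a ≠ b) (z : V) : (B.deleteVerts {z}).Connected := by
  by_cases hz : z ∈ B.verts
  · refine ⟨(hB.2.1 z hz).resolve_left fun h => hab ?_⟩
    rw [Subgraph.deleteVerts_verts, Set.sdiff_eq_empty] at h
    exact (h ha).trans (h hb).symm
  · rw [Subgraph.deleteVerts_singleton_of_notMem hz]
    exact hB.connected

lemma le_of_noCutVertex_sup (hB : IsBlock G B) {C : G.Subgraph} (hC : C.Connected)
    (hBC : (B ⊓ C).verts.Nonempty) (hncv : NoCutVertex (B ⊔ C)) : C ≤ B :=
  sup_eq_left.mp <| hB.2.2 _ le_sup_left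
    (Subgraph.connected_sup hB.connected.preconnected hC.preconnected hBC).coe hncv

lemma le_of_adj {B₁ B₂ : G.Subgraph} (hB₁ : IsBlock G B₁) (hB₂ : IsBlock G B₂) {i u : V}
    (h₁ : B₁.Adj i u) (h₂ : B₂.Adj i u) : B₂ ≤ B₁ := by
  have hne : i ≠ u := h₁.adj_sub.ne
  refine hB₁.le_of_noCutVertex_sup hB₂.connected ⟨i, h₁.fst_mem, h₂.fst_mem⟩
    (noCutVertex_of_forall_connected fun v => ?_)
  have hc₁ := hB₁.connected_deleteVerts h₁.fst_mem h₁.snd_mem hne v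
  have hc₂ := hB₂.connected_deleteVerts h₂.fst_mem h₂.snd_mem hne v
  by_cases hvi : v = i
  · exact Subgraph.connected_deleteVerts_sup hc₁ hc₂ h₁.snd_mem h₂.snd_mem
      (hvi ▸ hne.symm)
  · exact Subgraph.connected_deleteVerts_sup hc₁ hc₂ h₁.fst_mem h₂.fst_mem (Ne.symm hvi)

lemma eq_of_adj {B₁ B₂ : G.Subgraph} (hB₁ : IsBlock G B₁) (hB₂ : IsBlock G B₂) {i u : V}
    (h₁ : B₁.Adj i u) (h₂ : B₂.Adj i u) : B₁ = B₂ :=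
  le_antisymm (hB₂.le_of_adj hB₁ h₂ h₁) (hB₁.le_of_adj hB₂ h₁ h₂)

/-- Adding such a path to `B` creates no cut vertex, so the maximality of `B` absorbs it. -/
lemma toSubgraph_le (hB : IsBlock G B) {i u : V} (hi : i ∈ B.verts) (hu : u ∈ B.verts)
    (hne : i ≠ u) {q : G.Walk i u} (hq : q.IsPath)
    (hinner : ∀ z ∈ q.support, z = i ∨ z = u ∨ z ∉ B.verts) : q.toSubgraph ≤ B := by
  refine hB.le_of_noCutVertex_sup q.toSubgraph_connected ⟨i, hi, q.start_mem_verts_toSubgraph⟩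
    (noCutVertex_of_forall_connected fun v => ?_)
  have hBv := hB.connected_deleteVerts hi hu hne v
  by_cases hvq : v ∉ q.support
  · have hqv : (q.toSubgraph.deleteVerts {v}).Connected := by
      rw [Subgraph.deleteVerts_singleton_of_notMem ((Walk.mem_verts_toSubgraph q).not.mpr hvq)]
      exact q.toSubgraph_connected
    exact Subgraph.connected_deleteVerts_sup hBv hqv hi q.start_mem_verts_toSubgraph
      fun h => hvq (h ▸ q.start_mem_support)
  rw [not_not] at hvq
  rcases hinner v hvq with rfl | rfl | hvB
  · exact Subgraph.connected_deleteVerts_sup hBv (hq.connected_deleteVerts_start hne) hu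
      q.end_mem_verts_toSubgraph hne.symm
  · exact Subgraph.connected_deleteVerts_sup hBv (hq.connected_deleteVerts_end hne) hi
      q.start_mem_verts_toSubgraph hne
  · have hiv : i ≠ v := fun h => hvB (h ▸ hi)
    have hvu : v ≠ u := fun h => hvB (h ▸ hu)
    have hsplit : q.toSubgraph =
        (q.takeUntil v hvq).toSubgraph ⊔ (q.dropUntil v hvq).toSubgraph := by
      rw [← Walk.toSubgraph_append, q.take_spec hvq]
    rw [hsplit, ← sup_assoc]
    refine Subgraph.connected_deleteVerts_sup ?_
      ((hq.dropUntil hvq).connected_deleteVerts_start hvu)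
      (Or.inl hu) (Walk.end_mem_verts_toSubgraph _) hvu.symm
    exact Subgraph.connected_deleteVerts_sup hBv
      ((hq.takeUntil hvq).connected_deleteVerts_end hiv) hi
      (Walk.start_mem_verts_toSubgraph _) hiv

lemma adj_of_adj (hB : IsBlock G B) {i u : V} (hi : i ∈ B.verts) (hu : u ∈ B.verts)
    (h : G.Adj i u) : B.Adj i u := by
  have hle := hB.toSubgraph_le hi hu h.ne (q := .cons h .nil) (by simp [h.ne]) (by simp)
  exact hle.2 (by simp)

/-- Otherwise the bypass of a walk from `i` to `w`, followed by the edge `w u`, is a path that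
`toSubgraph_le` puts inside `B`, although `w ∉ B`. -/
lemma eq_of_mem_reachOutside (hB : IsBlock G B) {i w u : V} (hi : i ∈ B.verts)
    (hw : w ∈ B.reachOutside i) (hu : u ∈ B.verts) (hui : u ≠ i) (h : G.Adj w u) : w = i := by
  by_contra hwi
  obtain ⟨q, hq⟩ := hw
  have hp : ∀ z ∈ q.bypass.support, z = i ∨ z ∉ B.verts :=
    fun z hz => hq z (q.support_bypass_subset_support hz)
  have hwB : w ∉ B.verts := (hq w q.end_mem_support).resolve_left hwi
  have hup : u ∉ q.bypass.support := fun h' => (hp u h').elim hui (· hu)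
  refine hwB ((hB.toSubgraph_le hi hu hui.symm (q.bypass_isPath.concat hup h) fun z hz => ?_).1
    ((Walk.mem_verts_toSubgraph _).mpr ?_))
  · rw [Walk.support_concat, List.mem_append, List.mem_singleton] at hz
    rcases hz with hz | rfl
    · exact (hp z hz).imp_right Or.inr
    · exact Or.inr (Or.inl rfl)
  · rw [Walk.support_concat, List.mem_append, List.mem_singleton]
    exact Or.inl q.bypass.end_mem_support

lemma adj_of_mem_reachOutside (hB : IsBlock G B) {i w u : V} (hi : i ∈ B.verts)
    (hw : w ∈ B.reachOutside i) (hu : u ∉ B.reachOutside i) (h : G.Adj w u) :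
    w = i ∧ B.Adj i u := by
  have huB : u ∈ B.verts := by_contra fun huB => hu (Subgraph.mem_reachOutside_of_adj hw h huB)
  have hui : u ≠ i := fun hui => hu (hui ▸ B.start_mem_reachOutside i)
  obtain rfl := hB.eq_of_mem_reachOutside hi hw huB hui h
  exact ⟨rfl, hB.adj_of_adj hi huB h⟩

end IsBlock

lemma exists_isBlock_adj [Finite V] {i u : V} (h : G.Adj i u) :
    ∃ B, IsBlock G B ∧ B.Adj i u := by
  have hncv : NoCutVertex (G.subgraphOfAdj h) := by
    have hp : (Walk.cons h .nil).IsPath := by simp [h.ne]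
    intro v hv
    rw [subgraphOfAdj_verts] at hv
    rw [← Walk.toSubgraph_cons_nil_eq_subgraphOfAdj]
    rcases hv with rfl | rfl
    · exact Or.inr (hp.connected_deleteVerts_start h.ne).coe
    · exact Or.inr (hp.connected_deleteVerts_end h.ne).coe
  obtain ⟨B, hle, hmax⟩ := Finite.exists_le_maximal
    (p := fun B : G.Subgraph => B.Connected ∧ NoCutVertex B)
    ⟨Subgraph.subgraphOfAdj_connected h, hncv⟩
  refine ⟨B, ⟨hmax.1.1.coe, hmax.1.2, fun B' hle' hc hn => ?_⟩, hle.2 (by simp)⟩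
  exact (hmax.2 ⟨⟨hc⟩, hn⟩ hle').antisymm hle'

end Blocks

namespace SimpleGraph

variable {V : Type} {G : SimpleGraph V} {B : G.Subgraph} {f : ℝ → ℝ} {x : V → ℝ}

theorem IsEquilibrium.sum_edgeFlux_block_eq_zero [Fintype V] (hodd : ∀ t, f (-t) = -f t)
    (h : G.IsEquilibrium f x) (hB : IsBlock G B) {i : V} (hi : i ∈ B.verts) :
    ∑ u, B.spanningCoe.edgeFlux f x i u = 0 := by
  classical
  set R : Finset V := {w | w ∈ B.reachOutside i}
  have hR : ∀ w, w ∈ R ↔ w ∈ B.reachOutside i := by simp [R]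
  have hiR : i ∈ R := (hR i).mpr (B.start_mem_reachOutside i)
  have hleave : ∀ w ∈ R, ∀ u ∈ Rᶜ, G.Adj w u → w = i ∧ B.Adj i u := fun w hw u hu =>
    hB.adj_of_mem_reachOutside hi ((hR w).mp hw) (by simpa [hR] using hu)
  calc ∑ u, B.spanningCoe.edgeFlux f x i u
      = ∑ u ∈ Rᶜ, B.spanningCoe.edgeFlux f x i u := by
        refine (Finset.sum_subset (Finset.subset_univ _) fun u _ hu => ?_).symm
        refine edgeFlux_of_not_adj fun hiu => ?_
        exact Subgraph.notMem_reachOutside hiu.snd_mem hiu.ne.symm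
          ((hR u).mp (by simpa using hu))
    _ = ∑ u ∈ Rᶜ, G.edgeFlux f x i u := Finset.sum_congr rfl fun u hu =>
        edgeFlux_congr ⟨Subgraph.Adj.adj_sub, fun hiu => (hleave i hiR u hu hiu).2⟩
    _ = ∑ w ∈ R, ∑ u ∈ Rᶜ, G.edgeFlux f x w u := by
        rw [Finset.sum_eq_single_of_mem i hiR]
        exact fun w hw hwi => Finset.sum_eq_zero fun u hu =>
          edgeFlux_of_not_adj fun hwu => hwi (hleave w hw u hu hwu).1
    _ = 0 := Finset.sum_sum_compl_eq_zero_of_antisymm (edgeFlux_antisymm hodd) fun w _ => h w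

lemma edgeFlux_eq_sum_blocks [Finite V] {𝓑 : Finset G.Subgraph}
    (h𝓑 : ∀ B ∈ 𝓑, IsBlock G B) (hall : ∀ B, IsBlock G B → B ∈ 𝓑) (i u : V) :
    G.edgeFlux f x i u = ∑ B ∈ 𝓑, B.spanningCoe.edgeFlux f x i u := by
  by_cases h : G.Adj i u
  · obtain ⟨B₀, hB₀, hadj⟩ := exists_isBlock_adj h
    rw [Finset.sum_eq_single_of_mem B₀ (hall B₀ hB₀) fun B hB hne => edgeFlux_of_not_adj
      (G := B.spanningCoe) fun hB' => hne ((h𝓑 B hB).eq_of_adj hB₀ hB' hadj)]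
    exact edgeFlux_congr ⟨fun _ => hadj, fun _ => h⟩
  · rw [edgeFlux_of_not_adj h, eq_comm]
    exact Finset.sum_eq_zero fun B _ => edgeFlux_of_not_adj fun hB => h hB.adj_sub

theorem isEquilibrium_iff_blocks [Fintype V] (hodd : ∀ t, f (-t) = -f t) {ι : Type*}
    [Fintype ι] (Gs : ι → G.Subgraph) (hGs : ∀ j, IsBlock G (Gs j))
    (hall : ∀ B, IsBlock G B → ∃ j, Gs j = B) :
    G.IsEquilibrium f x ↔
      ∀ j, ∀ i ∈ (Gs j).verts, ∑ u, (Gs j).spanningCoe.edgeFlux f x i u = 0 := by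
  classical
  refine ⟨fun h j i hi => h.sum_edgeFlux_block_eq_zero hodd (hGs j) hi, fun h i => ?_⟩
  have h𝓑 : ∀ B ∈ Finset.univ.image Gs, IsBlock G B := fun B hB => by
    obtain ⟨j, -, rfl⟩ := Finset.mem_image.mp hB
    exact hGs j
  have hall' : ∀ B, IsBlock G B → B ∈ Finset.univ.image Gs := fun B hB => by
    simpa using hall B hB
  simp_rw [edgeFlux_eq_sum_blocks h𝓑 hall' i]
  rw [Finset.sum_comm]
  refine Finset.sum_eq_zero fun B hB => ?_
  obtain ⟨j, -, rfl⟩ := Finset.mem_image.mp hB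
  by_cases hi : i ∈ (Gs j).verts
  · exact h j i hi
  · exact sum_edgeFlux_eq_zero_of_notMem_support fun ⟨u, hu⟩ => hi hu.fst_mem

end SimpleGraph

/-- (1) If `G` is the union of two finite connected graphs `H` and `K`
whose vertex sets meet in exactly one vertex and whose edge sets are disjoint, then
`x` is an equilibrium of `G` iff its restrictions to `V(H)` and `V(K)` are equilibria
of `H` and `K`.  (2) Consequently, if `G` is connected with block decomposition
`G = G₁ ∪ ⋯ ∪ G_p`, then `x` is an equilibrium of `G` iff each restriction
`x|_{V(G_j)}` is an equilibrium of the block `G_j`. -/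
theorem stmt_17 {V : Type} [Fintype V] [DecidableEq V]
    (f : ℝ → ℝ) (hodd : ∀ t : ℝ, f (-t) = -f t) :
    -- (1) gluing two connected graphs along a single vertex
    (∀ (VH VK : Finset V) (kv : V), VH ∩ VK = {kv} → VH ∪ VK = Finset.univ →
      ∀ (H : SimpleGraph {v // v ∈ VH}) (K : SimpleGraph {v // v ∈ VK}),
        H.Connected → K.Connected →
      ∀ G : SimpleGraph V,
        (∀ i j : V, G.Adj i j ↔
          ((∃ (hi : i ∈ VH) (hj : j ∈ VH), H.Adj ⟨i, hi⟩ ⟨j, hj⟩) ∨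
           (∃ (hi : i ∈ VK) (hj : j ∈ VK), K.Adj ⟨i, hi⟩ ⟨j, hj⟩))) →
        (∀ (i j : V) (hiH : i ∈ VH) (hjH : j ∈ VH) (hiK : i ∈ VK) (hjK : j ∈ VK),
          ¬(H.Adj ⟨i, hiH⟩ ⟨j, hjH⟩ ∧ K.Adj ⟨i, hiK⟩ ⟨j, hjK⟩)) →
        ∀ x : V → ℝ,
          ((∀ i : V, ∑ j : V, (if G.Adj i j then f (x j - x i) else 0) = 0) ↔
            ((∀ i : {v // v ∈ VH},
                ∑ j : {v // v ∈ VH}, (if H.Adj i j then f (x j - x i) else 0) = 0) ∧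
             (∀ i : {v // v ∈ VK},
                ∑ j : {v // v ∈ VK}, (if K.Adj i j then f (x j - x i) else 0) = 0)))) ∧
    -- (2) decomposition into the blocks of a connected graph
    (∀ G : SimpleGraph V, G.Connected →
      ∀ (p : ℕ) (Gs : Fin p → G.Subgraph),
        (∀ j, IsBlock G (Gs j)) →
        (∀ B : G.Subgraph, IsBlock G B → ∃ j, Gs j = B) →
        ∀ x : V → ℝ,
          ((∀ i : V, ∑ j : V, (if G.Adj i j then f (x j - x i) else 0) = 0) ↔
            ∀ j : Fin p, ∀ i ∈ (Gs j).verts,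
              ∑ w : V, (if (Gs j).Adj i w then f (x w - x i) else 0) = 0)) := by
  refine ⟨fun VH VK k hcap _ H K _ _ G hG hdisj x => ?_, fun G _ p Gs hGs hall x => ?_⟩
  · exact SimpleGraph.isEquilibrium_iff_of_glue hodd hcap hG hdisj
  · exact SimpleGraph.isEquilibrium_iff_blocks hodd Gs hGs hall
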